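/- arXiv:math/0208162 — 3 statements merged into one kernel-verified Lean document; each statement's English description precedes it below -/
import Mathlib

section
/- Let H ⊆ G be a subgroup of finite index [G:H], and let u: P → P be an endomorphism of a finitely generated projective RG-module. Then P, regarded as an RH-module, is finitely generated projective, and tr_{RH}(u) = [G:H] · tr_{RG}(u). -/
/-- A finite projective coordinate system for a module over a group ring
`MonoidAlgebra R Γ`; it exists iff the module is finitely generated
projective.  The Hattori–Stallings trace is computed with respect to such a
system (and is independent of the choice). -/
structure ProjCoord (R : Type*) [CommRing R] (Γ : Type*) [Group Γ]
    (ι : Type*) [Fintype ι]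
    (P : Type*) [AddCommGroup P] [Module (MonoidAlgebra R Γ) P] where
  x : ι → P
  f : ι → (P →ₗ[MonoidAlgebra R Γ] MonoidAlgebra R Γ)
  dual : ∀ p : P, ∑ i, (f i p) • x i = p

/-- The Hattori–Stallings trace (coefficient at the identity of the sum of
diagonal entries). -/
noncomputable def ProjCoord.tr {R : Type*} [CommRing R] {Γ : Type*} [Group Γ]
    {ι : Type*} [Fintype ι] {P : Type*} [AddCommGroup P]
    [Module (MonoidAlgebra R Γ) P]
    (c : ProjCoord R Γ ι P) (u : P →ₗ[MonoidAlgebra R Γ] P) : R :=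
  ∑ i, (c.f i (u (c.x i))).coeff 1

/-!
Choose representatives `g_s` of the right cosets `H g_s`, so that `RG = ⨁_s RH · g_s` and every
`a : RG` is `∑_s π_s(a) g_s`, with `π_s(a) : RH` the `RH`-linear component `h ↦ a(h g_s)`.
A projective coordinate system `(x_i, f_i)` of `P` over `RG` then yields the coordinate system
`(g_s x_i, π_s ∘ f_i)` over `RH`. Its diagonal entries are `π_s(g_s f_i(u x_i))`, whose coefficient
at `1` is that of `f_i(u x_i)`: each of the `[G : H]` cosets contributes `tr_{RG}(u)`. Any other
coordinate system gives the same trace, because `(ab)(1) = (ba)(1)` in a group ring.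
-/

namespace MonoidAlgebra

theorem coeff_one_mul_comm {R : Type*} [CommSemiring R] {G : Type*} [Group G]
    (a b : MonoidAlgebra R G) : (a * b).coeff 1 = (b * a).coeff 1 := by
  rw [coeff_mul_apply_right, coeff_mul_apply_left]
  exact Finsupp.sum_congr fun g _ => by simp [mul_comm]

section CosetComponent

variable {R : Type*} [Semiring R] {G : Type*} [Group G] (H : Subgroup G)

noncomputable def cosetComponent (s : Quotient (QuotientGroup.rightRel H))
    (a : MonoidAlgebra R G) : MonoidAlgebra R H :=
  comapDomain (fun h : H => (h : G) * s.out)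
    ((mul_left_injective s.out).comp Subtype.val_injective) a

variable {H}

@[simp]
theorem coeff_cosetComponent (s : Quotient (QuotientGroup.rightRel H))
    (a : MonoidAlgebra R G) (h : H) :
    (cosetComponent H s a).coeff h = a.coeff ((h : G) * s.out) := by
  simp [cosetComponent]

theorem cosetComponent_add (s : Quotient (QuotientGroup.rightRel H))
    (a b : MonoidAlgebra R G) :
    cosetComponent H s (a + b) = cosetComponent H s a + cosetComponent H s b :=
  comapDomain_add _ _ a b

theorem coeff_mapDomainRingHom_subtype (b : MonoidAlgebra R H) (h : H) :
    (mapDomainRingHom R H.subtype b).coeff h = b.coeff h :=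
  Finsupp.mapDomain_apply Subtype.val_injective b.coeff h

theorem coeff_mapDomainRingHom_subtype_of_notMem (b : MonoidAlgebra R H) {g : G} (hg : g ∉ H) :
    (mapDomainRingHom R H.subtype b).coeff g = 0 :=
  Finsupp.mapDomain_of_notMem_range b.coeff g (by rintro ⟨h, rfl⟩; exact hg h.2)

theorem cosetComponent_mapDomainRingHom_mul (s : Quotient (QuotientGroup.rightRel H))
    (b : MonoidAlgebra R H) (a : MonoidAlgebra R G) :
    cosetComponent H s (mapDomainRingHom R H.subtype b * a) = b * cosetComponent H s a := by
  induction b using MonoidAlgebra.induction_linear with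
  | zero => ext; simp
  | add b b' hb hb' => rw [map_add, add_mul, add_mul, cosetComponent_add, hb, hb']
  | single k r => ext h; simp [mapDomainRingHom, mul_assoc]

theorem sum_cosetComponent_mul_single [Fintype (Quotient (QuotientGroup.rightRel H))]
    (a : MonoidAlgebra R G) :
    ∑ s, mapDomainRingHom R H.subtype (cosetComponent H s a) * single s.out 1 = a := by
  ext g
  rw [coeff_sum, Finsupp.finsetSum_apply, Finset.sum_eq_single ⟦g⟧]
  · have hg : g * (⟦g⟧ : Quotient (QuotientGroup.rightRel H)).out⁻¹ ∈ H :=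
      QuotientGroup.rightRel_apply.mp (Quotient.mk_out g)
    rw [coeff_mul_single_apply, coeff_mapDomainRingHom_subtype (h := ⟨_, hg⟩)]
    simp
  · intro s _ hs
    rw [coeff_mul_single_apply, coeff_mapDomainRingHom_subtype_of_notMem, zero_mul]
    intro hg
    exact hs (Quotient.out_eq s ▸ Quotient.sound (QuotientGroup.rightRel_apply.mpr hg))
  · simp

theorem coeff_one_cosetComponent_single_mul (s : Quotient (QuotientGroup.rightRel H))
    (a : MonoidAlgebra R G) :
    (cosetComponent H s (single s.out 1 * a)).coeff 1 = a.coeff 1 := by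
  simp

end CosetComponent

end MonoidAlgebra

namespace ProjCoord

variable {R : Type*} [CommRing R] {Γ : Type*} [Group Γ]
  {P : Type*} [AddCommGroup P] [Module (MonoidAlgebra R Γ) P]

theorem tr_eq_tr {ι κ : Type*} [Fintype ι] [Fintype κ]
    (c : ProjCoord R Γ ι P) (d : ProjCoord R Γ κ P) (u : P →ₗ[MonoidAlgebra R Γ] P) :
    c.tr u = d.tr u := by
  have hc (i : ι) : c.f i (u (c.x i)) = ∑ k, d.f k (c.x i) * c.f i (u (d.x k)) := by
    conv_lhs => rw [← d.dual (c.x i)]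
    simp [smul_eq_mul]
  have hd (k : κ) : d.f k (u (d.x k)) = ∑ i, c.f i (u (d.x k)) * d.f k (c.x i) := by
    conv_lhs => rw [← c.dual (u (d.x k))]
    simp [smul_eq_mul]
  simp only [tr, hc, hd, MonoidAlgebra.coeff_sum, Finsupp.finsetSum_apply]
  rw [Finset.sum_comm]
  exact Fintype.sum_congr _ _ fun k => Fintype.sum_congr _ _ fun i =>
    MonoidAlgebra.coeff_one_mul_comm _ _

def reindex {ι κ : Type*} [Fintype ι] [Fintype κ] (c : ProjCoord R Γ κ P) (e : ι ≃ κ) :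
    ProjCoord R Γ ι P where
  x := c.x ∘ e
  f := c.f ∘ e
  dual p := by
    conv_rhs => rw [← c.dual p]
    exact e.sum_comp fun k => c.f k p • c.x k

end ProjCoord

section Restriction

open MonoidAlgebra

variable {R : Type*} [CommRing R] {G : Type*} [Group G] {H : Subgroup G}
  {P : Type*} [AddCommGroup P] [Module (MonoidAlgebra R G) P]
  {Q : Type*} [AddCommGroup Q] [Module (MonoidAlgebra R H) Q] {j : P ≃+ Q}

theorem AddEquiv.symm_smul_of_map_smul
    (hj : ∀ (a : MonoidAlgebra R H) (p : P), j (mapDomainRingHom R H.subtype a • p) = a • j p)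
    (a : MonoidAlgebra R H) (q : Q) :
    j.symm (a • q) = mapDomainRingHom R H.subtype a • j.symm q :=
  j.symm_apply_eq.mpr <| by rw [hj, j.apply_symm_apply]

variable [Fintype (Quotient (QuotientGroup.rightRel H))] {ι : Type*} [Fintype ι]

noncomputable def ProjCoord.restrict
    (hj : ∀ (a : MonoidAlgebra R H) (p : P), j (mapDomainRingHom R H.subtype a • p) = a • j p)
    (c : ProjCoord R G ι P) : ProjCoord R H (ι × Quotient (QuotientGroup.rightRel H)) Q where
  x is := j ((single is.2.out 1 : MonoidAlgebra R G) • c.x is.1)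
  f is :=
    { toFun q := cosetComponent H is.2 (c.f is.1 (j.symm q))
      map_add' q q' := by simp only [map_add, cosetComponent_add]
      map_smul' a q := by
        simp only [AddEquiv.symm_smul_of_map_smul hj, map_smul, smul_eq_mul,
          cosetComponent_mapDomainRingHom_mul, RingHom.id_apply] }
  dual q := by
    rw [← j.apply_symm_apply q]
    simp only [LinearMap.coe_mk, AddHom.coe_mk, j.symm_apply_apply, ← hj, smul_smul, ← map_sum]
    congr 1
    conv_rhs => rw [← c.dual (j.symm q)]
    rw [Fintype.sum_prod_type]
    exact Fintype.sum_congr _ _ fun i => by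
      simp only [← Finset.sum_smul, sum_cosetComponent_mul_single]

theorem ProjCoord.tr_restrict
    (hj : ∀ (a : MonoidAlgebra R H) (p : P), j (mapDomainRingHom R H.subtype a • p) = a • j p)
    (c : ProjCoord R G ι P) {u : P →ₗ[MonoidAlgebra R G] P} {uH : Q →ₗ[MonoidAlgebra R H] Q}
    (hu : ∀ p, uH (j p) = j (u p)) :
    (c.restrict hj).tr uH = Fintype.card (Quotient (QuotientGroup.rightRel H)) * c.tr u := by
  simp only [tr, restrict, LinearMap.coe_mk, AddHom.coe_mk, hu, j.symm_apply_apply, map_smul,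
    smul_eq_mul, coeff_one_cosetComponent_single_mul, Fintype.sum_prod_type, Finset.sum_const,
    Finset.card_univ, nsmul_eq_mul, Finset.mul_sum]

end Restriction

/-- restriction to a subgroup of finite index.  Let
`H ⊆ G` have finite index and let `u` be an endomorphism of a finitely
generated projective `RG`-module `P`.  The restriction of `P` to `RH` is
encoded as an `RH`-module `Q` together with an additive bijection `j : P ≃ Q`
intertwining the `RH`-scalar multiplications (via
`mapDomainRingHom R H.subtype`).  Then `Q` is a finitely generated projective
`RH`-module (existence of a finite projective coordinate system), and for every
coordinate system the restricted endomorphism `α^* u = u_H` (characterized by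
`u_H ∘ j = j ∘ u`) satisfies `tr_{RH}(α^* u) = [G : H] · tr_{RG}(u)`. -/
theorem hattoriStallings_trace_restriction
    (R : Type*) [CommRing R] (G : Type*) [Group G]
    (H : Subgroup G) [H.FiniteIndex]
    {ι : Type*} [Fintype ι]
    (P : Type*) [AddCommGroup P] [Module (MonoidAlgebra R G) P]
    (Q : Type*) [AddCommGroup Q] [Module (MonoidAlgebra R (↥H)) Q]
    (j : P ≃+ Q)
    (hj : ∀ (a : MonoidAlgebra R (↥H)) (p : P),
      j ((MonoidAlgebra.mapDomainRingHom R H.subtype a) • p) = a • j p)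
    (cG : ProjCoord R G ι P)
    (u : P →ₗ[MonoidAlgebra R G] P) :
    (∃ n : ℕ, Nonempty (ProjCoord R (↥H) (Fin n) Q)) ∧
      ∀ {κ : Type} [Fintype κ] (cH : ProjCoord R (↥H) κ Q)
        (uH : Q →ₗ[MonoidAlgebra R (↥H)] Q),
        (∀ p : P, uH (j p) = j (u p)) →
        cH.tr uH = (H.index : R) * cG.tr u := by
  let _ : Fintype (G ⧸ H) := .ofFinite _
  have hcard : Fintype.card (Quotient (QuotientGroup.rightRel H)) = H.index := by
    rw [QuotientGroup.card_quotient_rightRel, H.index_eq_card, Nat.card_eq_fintype_card]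
  refine ⟨⟨_, ⟨(cG.restrict hj).reindex (Fintype.equivFin _).symm⟩⟩, fun cH uH hu => ?_⟩
  rw [cH.tr_eq_tr (cG.restrict hj), cG.tr_restrict hj hu, hcard]
end

section
/- The character map ch^G(X): U^G(X) → ⊕_{Is Π₀(G,X)} ℚ, whose [y]-component on a basis element [x: G/H → X] is Σ over WK_y-orbits of mor(y,x) of |(WK_y)_σ|⁻¹, is injective for every proper G-CW-complex X. -/
/-!
The component category `Π₀(G,X)` of a `G`-space `X` (tom Dieck): objects are
`G`-maps `x : G/H → X`, morphisms `x → y` are `G`-maps `σ : G/H → G/K` with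
`y ∘ σ ≃_G x`.  An object is encoded below by the pair `(H, x(1H))`, a
`G`-map `σ : G/H → G/K` by a group element `g` (with `σ(1H) = gK`), and a
`G`-homotopy of maps `G/H → X` by a path inside the `H`-fixed-point set.
`U^G(X)` is the free abelian group on the set of isomorphism classes of
objects, and the character map `ch^G(X)` has `[y]`-component on a basis
element `[x]` equal to `∑_{WK_y·σ ∈ WK_y\mor(y,x)} |(WK_y)_σ|⁻¹`.
-/

section ComponentCategory

variable (G : Type) [Group G] (X : Type) [TopologicalSpace X] [MulAction G X]

/-- The `H`-fixed-point set `X^H`. -/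
def FixedSet (H : Subgroup G) : Set X := {z | ∀ h ∈ H, h • z = z}

/-- An object of the component category `Π₀(G,X)`: a `G`-map `x : G/H → X`,
encoded by the subgroup `H` together with the point `x(1H) ∈ X^H`. -/
structure CompObj where
  H : Subgroup G
  pt : X
  mem : pt ∈ FixedSet G X H

/-- Isomorphism of objects of `Π₀(G,X)`: a `G`-homeomorphism `σ : G/H ≅ G/K`
(given by `g` with `g⁻¹Hg = K`) such that `y ∘ σ` is `G`-homotopic to `x`,
i.e. `x(1H)` and `g·y(1K)` lie in the same path component of `X^H`. -/
def IsoRel (a b : CompObj G X) : Prop :=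
  ∃ g : G, (∀ k : G, k ∈ a.H ↔ g⁻¹ * k * g ∈ b.H) ∧
    JoinedIn (FixedSet G X a.H) a.pt (g • b.pt)

/-- The set `Is Π₀(G,X)` of isomorphism classes of objects. -/
abbrev IsoClasses := Quot (IsoRel G X)

/-- `U^G(X)`, the free abelian group on `Is Π₀(G,X)`. -/
abbrev UG := IsoClasses G X →₀ ℤ

/-- The set of morphisms `mor(y,x)` from `y : G/K → X` to `x : G/H → X`,
viewed as the set of cosets `gH ∈ G/H` with `g⁻¹Kg ⊆ H` such that `y(1K)` and
`g·x(1H)` lie in the same path component of `X^K`. -/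
def Mor (y x : CompObj G X) : Set (G ⧸ x.H) :=
  {c | ∃ g : G, QuotientGroup.mk g = c ∧ (∀ k ∈ y.H, g⁻¹ * k * g ∈ x.H) ∧
    JoinedIn (FixedSet G X y.H) y.pt (g • x.pt)}

/-- The preimage in `G` of the group `WK_y ⊆ WK` (the isotropy group of the
component `X^K(y)` under the Weyl group action): elements of the normalizer of
`K = y.H` whose translation preserves the path component of `y`. -/
def NSet (y : CompObj G X) : Set G :=
  {n | (∀ k : G, k ∈ y.H ↔ n⁻¹ * k * n ∈ y.H) ∧
    JoinedIn (FixedSet G X y.H) y.pt (n • y.pt)}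

/-- The orbit relation of the `WK_y`-action on `mor(y,x)` (by precomposition
with right translations, i.e. `n • (gH) = (ng)H`). -/
def MorRel (y x : CompObj G X) (c c' : ↥(Mor G X y x)) : Prop :=
  ∃ n ∈ NSet G X y, n • (c : G ⧸ x.H) = (c' : G ⧸ x.H)

/-- `|(WK_y)_σ|`, the order of the isotropy group in `WK_y = N_y/K` of a
morphism `σ = gH`, computed as `|{n ∈ N_y | n·gH = gH}| / |K|`; its inverse is
the weight of the orbit of `σ` in the character map. -/
noncomputable def stabOrder (y x : CompObj G X) (c : G ⧸ x.H) : ℚ :=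
  (Nat.card {n : G // n ∈ NSet G X y ∧ n • c = c} : ℚ) / (Nat.card y.H : ℚ)

/-- The `[y]`-component of the character of the basis element `[x]`:
`∑_{WK_y·σ ∈ WK_y\mor(y,x)} |(WK_y)_σ|⁻¹` (a finite sum under the `G`-CW
hypotheses below). -/
noncomputable def chComp (y x : CompObj G X) : ℚ :=
  ∑ᶠ o : Quot (MorRel G X y x), (stabOrder G X y x ((Quot.out o : ↥(Mor G X y x)) : G ⧸ x.H))⁻¹

/-- The character map `ch^G(X) : U^G(X) → ∏_{Is Π₀(G,X)} ℚ`. -/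
noncomputable def chMap (u : UG G X) : IsoClasses G X → ℚ :=
  fun oy => u.sum fun ox m => (m : ℚ) * chComp G X (Quot.out oy) (Quot.out ox)

end ComponentCategory


/-!
Order the isomorphism classes of `Π₀(G,X)` by `[y] ≤ [x]` iff `mor(y,x) ≠ ∅`. This preorder is
antisymmetric: morphisms both ways give conjugations `g⁻¹Kg ⊆ H` and `g'⁻¹Hg' ⊆ K` between the
finite isotropy groups, so both are equalities and the morphism is an isomorphism. The character
map is triangular for this order with positive diagonal entries `ch_{[x]}[x]`, as `mor(x,x)`
contains the identity. So if `w ≠ 0`, then at a class `[x]` maximal in the support of `w` only the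
diagonal term survives, and `ch(w)_{[x]} = w([x]) · ch_{[x]}[x] ≠ 0`.
-/

section CharacterMap

variable {G : Type} [Group G] {X : Type} [MulAction G X]

lemma smul_mem_fixedSet {H K : Subgroup G} {g : G} (hg : ∀ k ∈ K, g⁻¹ * k * g ∈ H) {z : X}
    (hz : z ∈ FixedSet G X H) : g • z ∈ FixedSet G X K := by
  intro k hk
  rw [← mul_smul, show k * g = g * (g⁻¹ * k * g) by group, mul_smul, hz _ (hg k hk)]

lemma CompObj.finite_H (hproper : ∀ x : X, (MulAction.stabilizer G x : Set G).Finite)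
    (x : CompObj G X) : Finite x.H :=
  ((hproper x.pt).subset fun k hk => x.mem k hk).to_subtype

lemma map_conj_symm_le {K H : Subgroup G} {g : G} (hg : ∀ k ∈ K, g⁻¹ * k * g ∈ H) :
    K.map (MulAut.conj g).symm.toMonoidHom ≤ H := by
  rintro - ⟨k, hk, rfl⟩
  simpa using hg k hk

lemma card_le_of_conj_le {K H : Subgroup G} [Finite H] {g : G}
    (hg : ∀ k ∈ K, g⁻¹ * k * g ∈ H) : Nat.card K ≤ Nat.card H := by
  rw [← Subgroup.card_map_of_injective (f := (MulAut.conj g).symm.toMonoidHom)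
    (MulAut.conj g).symm.injective]
  exact Subgroup.card_le_of_le (map_conj_symm_le hg)

lemma conj_mem_iff_of_card_le {K H : Subgroup G} [Finite H] {g : G}
    (hg : ∀ k ∈ K, g⁻¹ * k * g ∈ H) (hcard : Nat.card H ≤ Nat.card K) (k : G) :
    k ∈ K ↔ g⁻¹ * k * g ∈ H := by
  have hmap := Subgroup.eq_of_le_of_card_ge (map_conj_symm_le hg)
    (by rwa [Subgroup.card_map_of_injective (f := (MulAut.conj g).symm.toMonoidHom)
      (MulAut.conj g).symm.injective])
  rw [← hmap, Subgroup.mem_map_equiv]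
  simp [mul_assoc]

variable [TopologicalSpace X]

lemma one_mem_NSet (y : CompObj G X) : (1 : G) ∈ NSet G X y :=
  ⟨fun k => by simp, by simpa using JoinedIn.refl y.mem⟩

lemma mor_self_nonempty (x : CompObj G X) : (Mor G X x x).Nonempty :=
  ⟨_, 1, rfl, fun k hk => by simpa using hk, by simpa using JoinedIn.refl x.mem⟩

lemma Mor.nonempty_trans [ContinuousConstSMul G X] {y x z : CompObj G X}
    (hyx : (Mor G X y x).Nonempty) (hxz : (Mor G X x z).Nonempty) :
    (Mor G X y z).Nonempty := by
  obtain ⟨-, g, -, hg, hy⟩ := hyx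
  obtain ⟨-, g', -, hg', hx⟩ := hxz
  refine ⟨_, g * g', rfl, fun k hk => by simpa [mul_assoc] using hg' _ (hg k hk), ?_⟩
  have hgx : JoinedIn (FixedSet G X y.H) (g • x.pt) (g • g' • z.pt) :=
    (hx.map (continuous_const_smul g)).mono <| by
      rintro - ⟨w, hw, rfl⟩
      exact smul_mem_fixedSet hg hw
  simpa only [mul_smul] using hy.trans hgx

lemma isoRel_of_mor_nonempty (hproper : ∀ x : X, (MulAction.stabilizer G x : Set G).Finite)
    {y x : CompObj G X} (hyx : (Mor G X y x).Nonempty) (hxy : (Mor G X x y).Nonempty) :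
    IsoRel G X y x := by
  obtain ⟨-, g, -, hg, hy⟩ := hyx
  obtain ⟨-, g', -, hg', -⟩ := hxy
  have := x.finite_H hproper
  have := y.finite_H hproper
  exact ⟨g, conj_mem_iff_of_card_le hg (card_le_of_conj_le hg'), hy⟩

variable (G X) in
abbrev morPreorder [ContinuousConstSMul G X] : Preorder (IsoClasses G X) where
  le a b := (Mor G X a.out b.out).Nonempty
  le_refl a := mor_self_nonempty a.out
  le_trans _ _ _ := Mor.nonempty_trans

lemma exists_mor_maximal [ContinuousConstSMul G X]
    (hproper : ∀ x : X, (MulAction.stabilizer G x : Set G).Finite)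
    {s : Finset (IsoClasses G X)} (hs : s.Nonempty) :
    ∃ a ∈ s, ∀ b ∈ s, (Mor G X a.out b.out).Nonempty → b = a := by
  let := morPreorder G X
  obtain ⟨a, ha, hmax⟩ := s.exists_maximal hs
  refine ⟨a, ha, fun b hb hab => ?_⟩
  rw [← Quot.out_eq a, ← Quot.out_eq b]
  exact Quot.sound (isoRel_of_mor_nonempty hproper (hmax hb hab) hab)

lemma stabOrder_pos {y x : CompObj G X} {c : G ⧸ x.H} [Finite y.H]
    [Finite {n : G // n ∈ NSet G X y ∧ n • c = c}] : 0 < stabOrder G X y x c := by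
  have : Nonempty {n : G // n ∈ NSet G X y ∧ n • c = c} := ⟨⟨1, one_mem_NSet y, one_smul G c⟩⟩
  exact div_pos (mod_cast Nat.card_pos) (mod_cast Nat.card_pos)

lemma chComp_pos {y x : CompObj G X} [Finite y.H] [Finite (Quot (MorRel G X y x))]
    (hstab : ∀ c : G ⧸ x.H, Finite {n : G // n ∈ NSet G X y ∧ n • c = c})
    (h : (Mor G X y x).Nonempty) : 0 < chComp G X y x := by
  have : Nonempty (Quot (MorRel G X y x)) := ⟨Quot.mk _ ⟨_, h.some_mem⟩⟩
  have := Fintype.ofFinite (Quot (MorRel G X y x))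
  rw [chComp, finsum_eq_sum_of_fintype]
  refine Finset.sum_pos (fun o _ => ?_) Finset.univ_nonempty
  have := hstab (o.out : G ⧸ x.H)
  exact inv_pos.mpr stabOrder_pos

lemma chComp_eq_zero {y x : CompObj G X} (h : ¬(Mor G X y x).Nonempty) :
    chComp G X y x = 0 := by
  have : IsEmpty (Mor G X y x) := Set.isEmpty_coe_sort.mpr (Set.not_nonempty_iff_eq_empty.mp h)
  have : IsEmpty (Quot (MorRel G X y x)) := ⟨fun o => IsEmpty.false o.out⟩
  exact finsum_of_isEmpty _

lemma chMap_sub (u v : UG G X) : chMap G X (u - v) = chMap G X u - chMap G X v :=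
  funext fun _ => Finsupp.sum_sub_index fun _ _ _ => by push_cast; ring

lemma chMap_apply_of_maximal {w : UG G X} {a : IsoClasses G X}
    (hmax : ∀ b ∈ w.support, (Mor G X a.out b.out).Nonempty → b = a) :
    chMap G X w a = w a * chComp G X a.out a.out :=
  Finsupp.sum_eq_single a
    (fun b hb hba => by rw [chComp_eq_zero (mt (hmax b (Finsupp.mem_support_iff.mpr hb)) hba),
      mul_zero])
    (by simp)

lemma chMap_ne_zero [ContinuousConstSMul G X]
    (hproper : ∀ x : X, (MulAction.stabilizer G x : Set G).Finite)
    (horbits : ∀ y x : CompObj G X, Finite (Quot (MorRel G X y x)))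
    (hstab : ∀ (y x : CompObj G X) (c : G ⧸ x.H),
      Finite {n : G // n ∈ NSet G X y ∧ n • c = c})
    {w : UG G X} (hw : w ≠ 0) : chMap G X w ≠ 0 := by
  obtain ⟨a, ha, hmax⟩ := exists_mor_maximal hproper (Finsupp.support_nonempty_iff.mpr hw)
  have := a.out.finite_H hproper
  have hdiag := chComp_pos (hstab _ _) (mor_self_nonempty a.out)
  intro h
  have hwa := congrFun h a
  rw [chMap_apply_of_maximal hmax] at hwa
  exact mul_ne_zero (mod_cast Finsupp.mem_support_iff.mp ha) hdiag.ne' hwa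

end CharacterMap

/-- for a proper `G`-CW-complex `X` (the action is
continuous and proper — all isotropy groups are finite — and, as holds for any
proper `G`-CW-complex, each morphism set `mor(y,x)` decomposes into finitely
many `WK_y`-orbits with finite isotropy groups), the character map
`ch^G(X) : U^G(X) → ∏_{Is Π₀(G,X)} ℚ` is injective. -/
theorem character_map_injective
    (G : Type) [Group G] (X : Type) [TopologicalSpace X] [MulAction G X]
    [ContinuousConstSMul G X]
    (hproper : ∀ x : X, (MulAction.stabilizer G x : Set G).Finite)
    (horbits : ∀ y x : CompObj G X, Finite (Quot (MorRel G X y x)))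
    (hstab : ∀ (y x : CompObj G X) (c : G ⧸ x.H),
      Finite {n : G // n ∈ NSet G X y ∧ n • c = c}) :
    Function.Injective (chMap G X) := by
  intro u v huv
  by_contra hne
  exact chMap_ne_zero hproper horbits hstab (sub_ne_zero.mpr hne)
    (by rw [chMap_sub, huv, sub_self])
end

section
/- Let Ξ: ℝⁿ → ℝⁿ be a smooth vector field with Ξ(0) = 0 whose differential T₀Ξ at 0 is invertible, and let Φ_t denote its (local) flow. Then there exists δ > 0 such that for all t ∈ [−δ, 0), the map id − T₀Φ_t is invertible and sign(det(id − T₀Φ_t)) = sign(det(T₀Ξ)). -/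
open Set

lemma sign_mul_of_pos' {c x : ℝ} (hc : 0 < c) : Real.sign (c * x) = Real.sign x := by
  rcases lt_trichotomy x 0 with h | h | h
  · rw [Real.sign_of_neg h, Real.sign_of_neg (mul_neg_of_pos_of_neg hc h)]
  · simp [h, Real.sign_zero]
  · rw [Real.sign_of_pos h, Real.sign_of_pos (mul_pos hc h)]

lemma sign_eq_of_abs_sub_lt' {x y : ℝ} (h : |x - y| < |y|) : Real.sign x = Real.sign y := by
  rcases lt_trichotomy y 0 with hy | hy | hy
  · have hx : x < 0 := by
      rw [abs_of_neg hy] at h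
      nlinarith [le_abs_self (x - y), neg_abs_le (x - y)]
    rw [Real.sign_of_neg hx, Real.sign_of_neg hy]
  · subst hy; simp at h; exact absurd h (abs_nonneg x).not_gt
  · have hx : 0 < x := by
      rw [abs_of_pos hy] at h
      nlinarith [le_abs_self (x - y), neg_abs_le (x - y)]
    rw [Real.sign_of_pos hx, Real.sign_of_pos hy]

/-- let `Ξ : ℝⁿ → ℝⁿ` be a smooth vector field with
`Ξ(0) = 0` whose differential `T₀Ξ` at `0` is invertible, and let `Φ` be a
(local) flow of `Ξ` defined on `(−ε,ε) × U` for a neighbourhood `U` of `0`.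
Then there is `δ > 0` such that for all `t ∈ [−δ, 0)` the map
`id − T₀Φ_t` is invertible and
`sign (det (id − T₀Φ_t)) = sign (det T₀Ξ)`. -/
theorem sign_det_id_sub_flow_eq_sign_det_vectorField
    (n : ℕ) (Ξ : EuclideanSpace ℝ (Fin n) → EuclideanSpace ℝ (Fin n))
    (hΞ : ContDiff ℝ (⊤ : ℕ∞) Ξ) (hΞ0 : Ξ 0 = 0)
    (hdet : LinearMap.det (fderiv ℝ Ξ 0).toLinearMap ≠ 0)
    (Φ : ℝ → EuclideanSpace ℝ (Fin n) → EuclideanSpace ℝ (Fin n))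
    (ε : ℝ) (hε : 0 < ε)
    (U : Set (EuclideanSpace ℝ (Fin n))) (hU : IsOpen U) (h0U : (0 : EuclideanSpace ℝ (Fin n)) ∈ U)
    (hΦ0 : ∀ u ∈ U, Φ 0 u = u)
    (hΦsmooth : ContDiffOn ℝ (⊤ : ℕ∞)
      (fun p : ℝ × EuclideanSpace ℝ (Fin n) => Φ p.1 p.2) (Ioo (-ε) ε ×ˢ U))
    (hflow : ∀ u ∈ U, ∀ t ∈ Ioo (-ε) ε, HasDerivAt (fun s => Φ s u) (Ξ (Φ t u)) t) :
    ∃ δ > 0, ∀ t ∈ Ico (-δ) (0 : ℝ),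
      LinearMap.det ((ContinuousLinearMap.id ℝ (EuclideanSpace ℝ (Fin n)) -
          fderiv ℝ (Φ t) 0)).toLinearMap ≠ 0 ∧
      Real.sign (LinearMap.det ((ContinuousLinearMap.id ℝ (EuclideanSpace ℝ (Fin n)) -
          fderiv ℝ (Φ t) 0)).toLinearMap) =
        Real.sign (LinearMap.det (fderiv ℝ Ξ 0).toLinearMap) := by
  have hE : True := trivial
  set f : ℝ × EuclideanSpace ℝ (Fin n) → EuclideanSpace ℝ (Fin n) := fun p => Φ p.1 p.2 with hfdef
  set S : Set (ℝ × EuclideanSpace ℝ (Fin n)) := Ioo (-ε) ε ×ˢ U with hSdef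
  have hSopen : IsOpen S := isOpen_Ioo.prod hU
  have h0ε : (0:ℝ) ∈ Ioo (-ε) ε := ⟨neg_lt_zero.2 hε, hε⟩
  have h00 : ((0:ℝ), (0:EuclideanSpace ℝ (Fin n))) ∈ S := ⟨h0ε, h0U⟩
  set A : ℝ → EuclideanSpace ℝ (Fin n) →L[ℝ] EuclideanSpace ℝ (Fin n) := fun t =>
    (fderiv ℝ f (t, 0)).comp (ContinuousLinearMap.inr ℝ ℝ (EuclideanSpace ℝ (Fin n))) with hAdef
  -- differentiability of f on S
  have hfdiff : ∀ p ∈ S, DifferentiableAt ℝ f p := fun p hp =>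
    (hΦsmooth.contDiffAt (hSopen.mem_nhds hp)).differentiableAt (by simp)
  -- Φ t has derivative A t at 0
  have hΦt : ∀ t ∈ Ioo (-ε) ε, HasFDerivAt (Φ t) (A t) 0 := by
    intro t ht
    have h1 : HasFDerivAt (fun x : EuclideanSpace ℝ (Fin n) => (t, x)) (ContinuousLinearMap.inr ℝ ℝ (EuclideanSpace ℝ (Fin n))) 0 :=
      hasFDerivAt_prodMk_right t 0
    have h2 : HasFDerivAt f (fderiv ℝ f (t, 0)) (t, 0) :=
      (hfdiff (t, 0) ⟨ht, h0U⟩).hasFDerivAt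
    exact h2.comp 0 h1
  have hΦt' : ∀ t ∈ Ioo (-ε) ε, fderiv ℝ (Φ t) 0 = A t := fun t ht => (hΦt t ht).fderiv
  -- A 0 = id
  have hA0 : A 0 = ContinuousLinearMap.id ℝ (EuclideanSpace ℝ (Fin n)) := by
    have heq : Φ 0 =ᶠ[nhds (0:EuclideanSpace ℝ (Fin n))] id := by
      filter_upwards [hU.mem_nhds h0U] with x hx using hΦ0 x hx
    rw [← hΦt' 0 h0ε, heq.fderiv_eq, fderiv_id]
  -- B
  set B := fderiv ℝ Ξ 0 with hBdef
  -- g := fderiv f smooth on S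
  have hg : ContDiffOn ℝ (⊤ : ℕ∞) (fderiv ℝ f) S := by
    have := hΦsmooth.fderiv_of_isOpen hSopen (m := (⊤ : ℕ∞)) (by simp)
    exact this
  have hgdiff : DifferentiableAt ℝ (fderiv ℝ f) ((0:ℝ), (0:EuclideanSpace ℝ (Fin n))) :=
    ((hg.contDiffAt (hSopen.mem_nhds h00)).differentiableAt (by simp))
  -- h t := fderiv f (t,0) has derivative fderiv g (0,0) (1,0)
  set L : (ℝ × EuclideanSpace ℝ (Fin n)) →L[ℝ] EuclideanSpace ℝ (Fin n) := fderiv ℝ (fderiv ℝ f) ((0:ℝ), (0:EuclideanSpace ℝ (Fin n))) ((1:ℝ), (0:EuclideanSpace ℝ (Fin n))) with hLdef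
  have hcurve : HasDerivAt (fun t : ℝ => ((t, (0:EuclideanSpace ℝ (Fin n))) : ℝ × EuclideanSpace ℝ (Fin n))) ((1:ℝ), (0:EuclideanSpace ℝ (Fin n))) 0 :=
    (hasDerivAt_id 0).prodMk (hasDerivAt_const 0 0)
  have hh : HasDerivAt (fun t : ℝ => fderiv ℝ f (t, 0)) L 0 :=
    hgdiff.hasFDerivAt.comp_hasDerivAt 0 hcurve
  -- A has derivative L.comp inr at 0
  have hAderiv : HasDerivAt A (L.comp (ContinuousLinearMap.inr ℝ ℝ (EuclideanSpace ℝ (Fin n)))) 0 := by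
    have hcont : HasFDerivAt
        (fun M : (ℝ × EuclideanSpace ℝ (Fin n)) →L[ℝ] EuclideanSpace ℝ (Fin n) => M.comp (ContinuousLinearMap.inr ℝ ℝ (EuclideanSpace ℝ (Fin n))))
        ((ContinuousLinearMap.compL ℝ (EuclideanSpace ℝ (Fin n)) (ℝ × EuclideanSpace ℝ (Fin n)) (EuclideanSpace ℝ (Fin n))).flip (ContinuousLinearMap.inr ℝ ℝ (EuclideanSpace ℝ (Fin n))))
        (fderiv ℝ f (0, 0)) := by
      have := ((ContinuousLinearMap.compL ℝ (EuclideanSpace ℝ (Fin n)) (ℝ × EuclideanSpace ℝ (Fin n)) (EuclideanSpace ℝ (Fin n))).flip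
        (ContinuousLinearMap.inr ℝ ℝ (EuclideanSpace ℝ (Fin n)))).hasFDerivAt (x := fderiv ℝ f ((0:ℝ), (0:EuclideanSpace ℝ (Fin n))))
      convert this using 2
      rfl
    have := hcont.comp_hasDerivAt 0 hh
    convert this using 1
    all_goals rfl
  -- identify L.comp inr = B
  have hsymm : IsSymmSndFDerivAt ℝ f ((0:ℝ), (0:EuclideanSpace ℝ (Fin n))) :=
    (hΦsmooth.contDiffAt (hSopen.mem_nhds h00)).isSymmSndFDerivAt (by rw [minSmoothness_of_isRCLikeNormedField]; exact WithTop.coe_le_coe.mpr le_top)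
  have hk : ∀ p ∈ S, fderiv ℝ f p ((1:ℝ), (0:EuclideanSpace ℝ (Fin n))) = Ξ (f p) := by
    intro p hp
    have h1 : HasDerivAt (fun s : ℝ => f (s, p.2)) (fderiv ℝ f p ((1:ℝ), (0:EuclideanSpace ℝ (Fin n)))) p.1 := by
      have hc : HasDerivAt (fun s : ℝ => ((s, p.2) : ℝ × EuclideanSpace ℝ (Fin n))) ((1:ℝ), (0:EuclideanSpace ℝ (Fin n))) p.1 :=
        (hasDerivAt_id p.1).prodMk (hasDerivAt_const p.1 p.2)
      have := (hfdiff p hp).hasFDerivAt.comp_hasDerivAt p.1 (by simpa using hc)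
      exact this
    have h2 : HasDerivAt (fun s : ℝ => f (s, p.2)) (Ξ (f p)) p.1 := hflow p.2 hp.2 p.1 hp.1
    exact h1.unique h2
  have hf00 : f ((0:ℝ), (0:EuclideanSpace ℝ (Fin n))) = 0 := hΦ0 0 h0U
  have hLB : L.comp (ContinuousLinearMap.inr ℝ ℝ (EuclideanSpace ℝ (Fin n))) = B := by
    have hk1 : HasFDerivAt (fun p => fderiv ℝ f p ((1:ℝ), (0:EuclideanSpace ℝ (Fin n))))
        ((ContinuousLinearMap.apply ℝ (EuclideanSpace ℝ (Fin n))
            ((1:ℝ), (0:EuclideanSpace ℝ (Fin n)))).comp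
          (fderiv ℝ (fderiv ℝ f) ((0:ℝ), (0:EuclideanSpace ℝ (Fin n)))))
        ((0:ℝ), (0:EuclideanSpace ℝ (Fin n))) :=
      (ContinuousLinearMap.apply ℝ (EuclideanSpace ℝ (Fin n))
        ((1:ℝ), (0:EuclideanSpace ℝ (Fin n)))).hasFDerivAt.comp _ hgdiff.hasFDerivAt
    have heq : (fun p => fderiv ℝ f p ((1:ℝ), (0:EuclideanSpace ℝ (Fin n))))
        =ᶠ[nhds ((0:ℝ), (0:EuclideanSpace ℝ (Fin n)))] (fun p => Ξ (f p)) := by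
      filter_upwards [hSopen.mem_nhds h00] with p hp using hk p hp
    have hk2 : HasFDerivAt (fun p => Ξ (f p))
        (B.comp (fderiv ℝ f ((0:ℝ), (0:EuclideanSpace ℝ (Fin n)))))
        ((0:ℝ), (0:EuclideanSpace ℝ (Fin n))) := by
      have hΞd : HasFDerivAt Ξ B (f ((0:ℝ), (0:EuclideanSpace ℝ (Fin n)))) := by
        rw [hf00]; exact (hΞ.differentiable (by simp) 0).hasFDerivAt
      exact hΞd.comp _ (hfdiff _ h00).hasFDerivAt
    have hk1' : HasFDerivAt (fun p => fderiv ℝ f p ((1:ℝ), (0:EuclideanSpace ℝ (Fin n))))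
        (B.comp (fderiv ℝ f ((0:ℝ), (0:EuclideanSpace ℝ (Fin n)))))
        ((0:ℝ), (0:EuclideanSpace ℝ (Fin n))) := hk2.congr_of_eventuallyEq heq
    have huniq := hk1.unique hk1'
    ext v
    have hs := hsymm ((1:ℝ), (0:EuclideanSpace ℝ (Fin n))) ((0:ℝ), v)
    have h2 := congrFun (congrArg (fun (M : (ℝ × EuclideanSpace ℝ (Fin n)) →L[ℝ]
        EuclideanSpace ℝ (Fin n)) => (M : ℝ × EuclideanSpace ℝ (Fin n) → EuclideanSpace ℝ (Fin n)))
        huniq) ((0:ℝ), v)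
    simp only [ContinuousLinearMap.coe_comp', Function.comp_apply,
      ContinuousLinearMap.apply_apply, ContinuousLinearMap.coe_coe] at h2
    have hA0v : fderiv ℝ f ((0:ℝ), (0:EuclideanSpace ℝ (Fin n))) ((0:ℝ), v) = v := by
      have : A 0 v = v := by rw [hA0]; rfl
      simpa [hAdef] using this
    simp only [ContinuousLinearMap.comp_apply, ContinuousLinearMap.inr_apply, hLdef]
    rw [hs, h2, hA0v]
  rw [hLB] at hAderiv
  -- slope tends to B
  have hslope : Filter.Tendsto (slope A 0) (nhdsWithin 0 {(0:ℝ)}ᶜ) (nhds B) :=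
    hasDerivAt_iff_tendsto_slope.1 hAderiv
  have hBdet : B.det ≠ 0 := hdet
  have hdetc : Filter.Tendsto (fun t => (slope A 0 t).det) (nhdsWithin 0 {(0:ℝ)}ᶜ)
      (nhds B.det) := (ContinuousLinearMap.continuous_det.tendsto B).comp hslope
  have hball : ∀ᶠ x in nhds B.det, |x - B.det| < |B.det| := by
    have := Metric.ball_mem_nhds B.det (abs_pos.2 hBdet)
    filter_upwards [this] with x hx
    simpa [Real.dist_eq] using hx
  have hev2 : ∀ᶠ t in nhdsWithin 0 {(0:ℝ)}ᶜ, |(slope A 0 t).det - B.det| < |B.det| :=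
    hdetc.eventually hball
  rw [eventually_nhdsWithin_iff] at hev2
  rcases Metric.eventually_nhds_iff.1 hev2 with ⟨δ', hδ', hP⟩
  refine ⟨min (δ'/2) (ε/2), by positivity, ?_⟩
  intro t ht
  obtain ⟨ht1, ht2⟩ := ht
  have htne : t ≠ 0 := ht2.ne
  have hmin1 : min (δ'/2) (ε/2) ≤ δ'/2 := min_le_left _ _
  have hmin2 : min (δ'/2) (ε/2) ≤ ε/2 := min_le_right _ _
  have htd : dist t 0 < δ' := by
    rw [Real.dist_eq, sub_zero, abs_of_neg ht2]; linarith
  have htε : t ∈ Ioo (-ε) ε := ⟨by linarith, by linarith⟩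
  have hkey := hP htd htne
  have hψdet : (slope A 0 t).det ≠ 0 := by
    intro h0
    rw [h0, zero_sub, abs_neg] at hkey
    exact absurd hkey (lt_irrefl _)
  have hid : ContinuousLinearMap.id ℝ (EuclideanSpace ℝ (Fin n)) - fderiv ℝ (Φ t) 0
      = (-t) • slope A 0 t := by
    rw [hΦt' t htε, slope_def_module, smul_smul]
    have hc : -t * (t - 0)⁻¹ = -1 := by
      rw [sub_zero]; field_simp
    rw [hc, hA0]; module
  rw [hid]
  have hdet_eq : LinearMap.det ((-t • slope A 0 t :
      EuclideanSpace ℝ (Fin n) →L[ℝ] EuclideanSpace ℝ (Fin n))).toLinearMap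
      = (-t) ^ n * (slope A 0 t).det := by
    rw [ContinuousLinearMap.coe_smul, LinearMap.det_smul]
    congr 1
    rw [finrank_euclideanSpace_fin]
  rw [hdet_eq]
  have hpos : (0:ℝ) < (-t) ^ n := pow_pos (by linarith) n
  constructor
  · exact mul_ne_zero (ne_of_gt hpos) hψdet
  · rw [sign_mul_of_pos' hpos]
    exact sign_eq_of_abs_sub_lt' hkey
end
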